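/- The probabilities p_m(t) given by the closed-form death-process formula sum to 1: Σ_{m=0}^{M} Σ_{i=m}^{M} C(M,i)·C(i,m)·(-1)^{i-m}·((N-2t)!!/N!!)·((N-i)!!/(N-2t-i)!!) = 1 for all t with 2t + M ≤ N. -/
import Mathlib


/-- Double factorial: 0!! = 1, 1!! = 1, n!! = n·(n-2)!!. -/
def dfact : ℕ → ℕ
  | 0 => 1
  | 1 => 1
  | n + 2 => (n + 2) * dfact n

theorem dfact_pos : ∀ n, 0 < dfact n
  | 0 => Nat.one_pos
  | 1 => Nat.one_pos
  | n + 2 => Nat.mul_pos (Nat.succ_pos _) (dfact_pos n)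

theorem stmt_18 (N M t : ℕ) (hMN : M ≤ N) (ht : 2 * t + M ≤ N) :
    ∑ m ∈ Finset.range (M + 1), ∑ i ∈ Finset.Icc m M,
        (M.choose i : ℚ) * (i.choose m : ℚ) * (-1 : ℚ) ^ (i - m) *
          ((dfact (N - 2 * t) : ℚ) / (dfact N : ℚ)) *
          ((dfact (N - i) : ℚ) / (dfact (N - 2 * t - i) : ℚ)) = 1 := by
  rw [Finset.sum_comm' (t' := Finset.range (M + 1)) (s' := fun i => Finset.range (i + 1))
    (by intro m i; simp [Finset.mem_range, Finset.mem_Icc]; omega)]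
  have key : ∀ i ∈ Finset.range (M + 1),
      (∑ m ∈ Finset.range (i + 1),
        (M.choose i : ℚ) * (i.choose m : ℚ) * (-1 : ℚ) ^ (i - m) *
          ((dfact (N - 2 * t) : ℚ) / (dfact N : ℚ)) *
          ((dfact (N - i) : ℚ) / (dfact (N - 2 * t - i) : ℚ))) =
      (0 : ℚ) ^ i * ((M.choose i : ℚ) *
          ((dfact (N - 2 * t) : ℚ) / (dfact N : ℚ)) *
          ((dfact (N - i) : ℚ) / (dfact (N - 2 * t - i) : ℚ))) := by
    intro i _
    have h := add_pow (1 : ℚ) (-1) i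
    simp only [one_pow, one_mul, add_neg_cancel] at h
    rw [← Finset.sum_mul, ← Finset.sum_mul]
    have h2 : (∑ m ∈ Finset.range (i + 1),
        (M.choose i : ℚ) * (i.choose m : ℚ) * (-1 : ℚ) ^ (i - m)) =
        (M.choose i : ℚ) * (0 : ℚ) ^ i := by
      rw [h, Finset.mul_sum]
      exact Finset.sum_congr rfl fun m _ => by ring
    rw [h2]; ring
  rw [Finset.sum_congr rfl key, Finset.sum_eq_single 0]
  · have h1 : (dfact N : ℚ) ≠ 0 := Nat.cast_ne_zero.2 (dfact_pos N).ne'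
    have h2 : (dfact (N - 2 * t) : ℚ) ≠ 0 := Nat.cast_ne_zero.2 (dfact_pos _).ne'
    simp
    field_simp
  · intro i _ hi
    simp [zero_pow hi]
  · simp
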